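/- Assume X_A and X_B are conditionally independent given Y, the prior is stable, and f is a differentiable convex function with f(1)=0 whose derivative f' is injective. Let ŝ_A^tr(x_A)(y) = Pr[Y=y|X_A=x_A] and ŝ_B^tr(x_B)(y) = Pr[Y=y|X_B=x_B] be the truthful strategies. If ŝ_B : Σ_B → Δ_Σ satisfies ŝ_B(x_B) ≠ ŝ_B^tr(x_B) for some x_B, then Pay(ŝ_A^tr, ŝ_B) < Pay(ŝ_A^tr, ŝ_B^tr) = MI^f(X_A;X_B); symmetrically, if ŝ_A : Σ_A → Δ_Σ satisfies ŝ_A(x_A) ≠ ŝ_A^tr(x_A) for some x_A, then Pay(ŝ_A, ŝ_B^tr) < MI^f(X_A;X_B). -/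

import Mathlib

noncomputable section

variable {SA SB S : Type*}

/-- Joint probability `Pr[X_A = a, X_B = b]` induced by the joint pmf `ν` of `(X_A, X_B, Y)`. -/
def jAB [Fintype S] (ν : SA → SB → S → ℝ) (a : SA) (b : SB) : ℝ := ∑ y, ν a b y

/-- Joint probability `Pr[X_A = a, Y = y]`. -/
def jAY [Fintype SB] (ν : SA → SB → S → ℝ) (a : SA) (y : S) : ℝ := ∑ b, ν a b y

/-- Joint probability `Pr[X_B = b, Y = y]`. -/
def jBY [Fintype SA] (ν : SA → SB → S → ℝ) (b : SB) (y : S) : ℝ := ∑ a, ν a b y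

/-- Marginal probability `Pr[X_A = a]`. -/
def prA [Fintype SB] [Fintype S] (ν : SA → SB → S → ℝ) (a : SA) : ℝ := ∑ b, ∑ y, ν a b y

/-- Marginal probability `Pr[X_B = b]`. -/
def prB [Fintype SA] [Fintype S] (ν : SA → SB → S → ℝ) (b : SB) : ℝ := ∑ a, ∑ y, ν a b y

/-- Marginal probability `Pr[Y = y]`. -/
def prY [Fintype SA] [Fintype SB] (ν : SA → SB → S → ℝ) (y : S) : ℝ := ∑ a, ∑ b, ν a b y

/-- Pointwise mutual information `K(a,b) = Pr[a,b]/(Pr[a]·Pr[b])`. -/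
def K [Fintype SA] [Fintype SB] [Fintype S] (ν : SA → SB → S → ℝ) (a : SA) (b : SB) : ℝ :=
  jAB ν a b / (prA ν a * prB ν b)

/-- Conditional probability `Pr[Y = y | X_A = a]`. -/
def condA [Fintype SB] [Fintype S] (ν : SA → SB → S → ℝ) (a : SA) (y : S) : ℝ :=
  jAY ν a y / prA ν a

/-- Conditional probability `Pr[Y = y | X_B = b]`. -/
def condB [Fintype SA] [Fintype S] (ν : SA → SB → S → ℝ) (b : SB) (y : S) : ℝ :=
  jBY ν b y / prB ν b

/-- `X_A` and `X_B` are conditionally independent given `Y`: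
`Pr[a, b | y] = Pr[a | y] · Pr[b | y]` for all `a, b, y`. -/
def CondIndep [Fintype SA] [Fintype SB] (ν : SA → SB → S → ℝ) : Prop :=
  ∀ a b y, ν a b y / prY ν y = (jAY ν a y / prY ν y) * (jBY ν b y / prY ν y)

/-- `ν` is a probability mass function. -/
def IsPMF [Fintype SA] [Fintype SB] [Fintype S] (ν : SA → SB → S → ℝ) : Prop :=
  (∀ a b y, 0 ≤ ν a b y) ∧ ∑ a, ∑ b, ∑ y, ν a b y = 1

/-- `p` is a probability vector: nonnegative entries summing to `1`. -/
def IsProbVec {T : Type*} [Fintype T] (p : T → ℝ) : Prop := (∀ t, 0 ≤ p t) ∧ ∑ t, p t = 1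

/-- The convex conjugate `f*(x) = sup_t (t·x − f(t))`, as a real-valued supremum. -/
def fconj (f : ℝ → ℝ) (x : ℝ) : ℝ := sSup (Set.range fun t => t * x - f t)

/-- `c` is a subgradient of `f` at `t`: `f(s) ≥ f(t) + c·(s − t)` for all `s`. -/
def IsSubgradientAt (f : ℝ → ℝ) (t c : ℝ) : Prop := ∀ s : ℝ, f t + c * (s - t) ≤ f s

/-- The f-mutual information `MI^f(X_A;X_B) = Σ_{a,b} Pr[a]·Pr[b]·f(K(a,b))`. -/
def MIf [Fintype SA] [Fintype SB] [Fintype S] (f : ℝ → ℝ) (ν : SA → SB → S → ℝ) : ℝ :=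
  ∑ a, ∑ b, prA ν a * prB ν b * f (K ν a b)

/-- The agreement `g(a,b) = Σ_y h_A(a)(y)·h_B(b)(y)/p(y)`. -/
def gagr [Fintype S] (hA : SA → S → ℝ) (hB : SB → S → ℝ) (p : S → ℝ) (a : SA) (b : SB) : ℝ :=
  ∑ y, hA a y * hB b y / p y

/-- Expected `f`-mutual information gain
`MIG^f(h_A,h_B,p) = Σ Pr[a,b]·f'(g(a,b)) − Σ Pr[a]·Pr[b]·f*(f'(g(a,b)))`. -/
def MIG [Fintype SA] [Fintype SB] [Fintype S] (f : ℝ → ℝ) (ν : SA → SB → S → ℝ)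
    (hA : SA → S → ℝ) (hB : SB → S → ℝ) (p : S → ℝ) : ℝ :=
  ∑ a, ∑ b, jAB ν a b * deriv f (gagr hA hB p a b)
    - ∑ a, ∑ b, prA ν a * prB ν b * fconj f (deriv f (gagr hA hB p a b))

/-- Each agent's expected payment in the multi-task common ground mechanism `MCG(f)`. -/
def Pay [Fintype SA] [Fintype SB] [Fintype S] (f : ℝ → ℝ) (ν : SA → SB → S → ℝ)
    (sA : SA → S → ℝ) (sB : SB → S → ℝ) : ℝ :=
  MIG f ν sA sB (prY ν)

/-- `({a^{x_A}}, {b^{x_B}}, r)` is a solution of the agreement system: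
probability vectors, `r` strictly positive, with
`Σ_y a^{x_A}(y)·b^{x_B}(y)/r(y) = K(x_A,x_B)` for all `x_A, x_B`. -/
def AgreementSolution [Fintype SA] [Fintype SB] [Fintype S] (ν : SA → SB → S → ℝ)
    (a : SA → S → ℝ) (b : SB → S → ℝ) (r : S → ℝ) : Prop :=
  (∀ xa, IsProbVec (a xa)) ∧ (∀ xb, IsProbVec (b xb)) ∧ IsProbVec r ∧ (∀ y, 0 < r y) ∧
    ∀ xa xb, (∑ y, a xa y * b xb y / r y) = K ν xa xb

/-- The prior is well-defined: any two solutions of the agreement system coincide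
up to a permutation of `Σ`. -/
def WellDefinedPrior [Fintype SA] [Fintype SB] [Fintype S] (ν : SA → SB → S → ℝ) : Prop :=
  ∀ (a : SA → S → ℝ) (b : SB → S → ℝ) (r : S → ℝ)
    (c : SA → S → ℝ) (d : SB → S → ℝ) (r' : S → ℝ),
    AgreementSolution ν a b r → AgreementSolution ν c d r' →
    ∃ π : Equiv.Perm S, ∀ y, r (π y) = r' y ∧ (∀ xa, a xa (π y) = c xa y)
      ∧ (∀ xb, b xb (π y) = d xb y)

/-- The prior is stable: fixing the truthful `A`-side (resp. `B`-side) of the agreement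
system, the only solution for the other side is the truthful one. -/
def StablePrior [Fintype SA] [Fintype SB] [Fintype S] (ν : SA → SB → S → ℝ) : Prop :=
  (∀ b : SB → S → ℝ, (∀ xb, IsProbVec (b xb)) →
    (∀ xa xb, (∑ y, condA ν xa y * b xb y / prY ν y) = K ν xa xb) →
    ∀ xb y, b xb y = condB ν xb y) ∧
  (∀ a : SA → S → ℝ, (∀ xa, IsProbVec (a xa)) →
    (∀ xa xb, (∑ y, a xa y * condB ν xb y / prY ν y) = K ν xa xb) →
    ∀ xa y, a xa y = condA ν xa y)

/-!
Writing `jAB = Pr[a]·Pr[b]·K` and using `f*(f'(g)) = g·f'(g) − f(g)`, the payment becomes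
`MI^f(X_A;X_B) − Σ Pr[a]·Pr[b]·D_f(K(a,b), g(a,b))`, where `D_f` is the Bregman divergence
of `f`. Conditional independence makes the truthful agreement `g` equal to `K`, so truth-telling
earns `MI^f`. Injectivity of `f'` makes `f` strictly convex, so `D_f(K, g) > 0` whenever
`g ≠ K`; stability of the prior says that a unilateral deviation from truth-telling must
produce such a pair `(a, b)`.
-/

section Bregman

def bregmanDiv (f : ℝ → ℝ) (y x : ℝ) : ℝ := f y - (f x + deriv f x * (y - x))

variable {f : ℝ → ℝ} {s : Set ℝ} {x y : ℝ}

@[simp]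
lemma bregmanDiv_self (f : ℝ → ℝ) (x : ℝ) : bregmanDiv f x x = 0 := by
  simp [bregmanDiv]

lemma ConvexOn.add_deriv_mul_sub_le (hf : ConvexOn ℝ s f) (hx : x ∈ s) (hy : y ∈ s)
    (hfx : DifferentiableAt ℝ f x) : f x + deriv f x * (y - x) ≤ f y := by
  rcases lt_trichotomy x y with hxy | rfl | hxy
  · have h := hf.deriv_le_slope hx hy hxy hfx
    rw [slope_def_field, le_div_iff₀ (sub_pos.mpr hxy)] at h
    linarith
  · simp
  · have h := hf.slope_le_deriv hy hx hxy hfx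
    rw [slope_def_field, div_le_iff₀ (sub_pos.mpr hxy)] at h
    linarith

lemma StrictConvexOn.add_deriv_mul_sub_lt (hf : StrictConvexOn ℝ s f) (hx : x ∈ s) (hy : y ∈ s)
    (hfx : DifferentiableAt ℝ f x) (hxy : x ≠ y) : f x + deriv f x * (y - x) < f y := by
  rcases hxy.lt_or_gt with hxy | hxy
  · have h := hf.deriv_lt_slope hx hy hxy hfx
    rw [slope_def_field, lt_div_iff₀ (sub_pos.mpr hxy)] at h
    linarith
  · have h := hf.slope_lt_deriv hy hx hxy hfx
    rw [slope_def_field, div_lt_iff₀ (sub_pos.mpr hxy)] at h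
    linarith

lemma ConvexOn.strictConvexOn_univ_of_injective_deriv (hf : ConvexOn ℝ Set.univ f)
    (hdiff : Differentiable ℝ f) (hinj : Function.Injective (deriv f)) :
    StrictConvexOn ℝ Set.univ f :=
  have hmono : Monotone (deriv f) :=
    monotoneOn_univ.mp (hf.monotoneOn_deriv fun z _ => hdiff z)
  (hmono.strictMono_of_injective hinj).strictConvexOn_univ_of_deriv hdiff.continuous

lemma bregmanDiv_nonneg (hf : ConvexOn ℝ Set.univ f) (hdiff : Differentiable ℝ f) (x y : ℝ) :
    0 ≤ bregmanDiv f y x :=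
  sub_nonneg.mpr (hf.add_deriv_mul_sub_le trivial trivial (hdiff x))

lemma bregmanDiv_pos (hf : StrictConvexOn ℝ Set.univ f) (hdiff : Differentiable ℝ f)
    (hxy : x ≠ y) : 0 < bregmanDiv f y x :=
  sub_pos.mpr (hf.add_deriv_mul_sub_lt trivial trivial (hdiff x) hxy)

end Bregman

section Payment

variable [Fintype SA] [Fintype SB] [Fintype S] (ν : SA → SB → S → ℝ)

lemma jAB_eq_prA_mul_prB_mul_K {a : SA} {b : SB} (ha : prA ν a ≠ 0) (hb : prB ν b ≠ 0) :
    jAB ν a b = prA ν a * prB ν b * K ν a b := by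
  rw [K, mul_div_cancel₀ _ (mul_ne_zero ha hb)]

lemma gagr_condA_condB (hY : ∀ y, prY ν y ≠ 0) (hci : CondIndep ν) {a : SA} {b : SB}
    (ha : prA ν a ≠ 0) (hb : prB ν b ≠ 0) :
    gagr (condA ν) (condB ν) (prY ν) a b = K ν a b := by
  rw [gagr, K, jAB, eq_div_iff (mul_ne_zero ha hb), Finset.sum_mul]
  refine Finset.sum_congr rfl fun y _ => ?_
  have hy := hY y
  have hciy : jAY ν a y * jBY ν b y = ν a b y * prY ν y := by
    have h := hci a b y
    field_simp at h
    linarith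
  rw [condA, condB]
  field_simp
  linear_combination hciy

lemma pay_eq_MIf_sub_sum_bregmanDiv {f : ℝ → ℝ} (hA : ∀ a, prA ν a ≠ 0) (hB : ∀ b, prB ν b ≠ 0)
    (hconj : ∀ t : ℝ, fconj f (deriv f t) = t * deriv f t - f t)
    (sA : SA → S → ℝ) (sB : SB → S → ℝ) :
    Pay f ν sA sB = MIf f ν - ∑ a, ∑ b, prA ν a * prB ν b *
      bregmanDiv f (K ν a b) (gagr sA sB (prY ν) a b) := by
  simp only [Pay, MIG, MIf, bregmanDiv, hconj, ← Finset.sum_sub_distrib]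
  refine Finset.sum_congr rfl fun a _ => Finset.sum_congr rfl fun b _ => ?_
  rw [jAB_eq_prA_mul_prB_mul_K ν (hA a) (hB b)]
  ring

lemma pay_condA_condB (hA : ∀ a, 0 < prA ν a) (hB : ∀ b, 0 < prB ν b)
    (hY : ∀ y, 0 < prY ν y) (hci : CondIndep ν) {f : ℝ → ℝ}
    (hconj : ∀ t : ℝ, fconj f (deriv f t) = t * deriv f t - f t) :
    Pay f ν (condA ν) (condB ν) = MIf f ν := by
  simp [pay_eq_MIf_sub_sum_bregmanDiv ν (fun a => (hA a).ne') (fun b => (hB b).ne') hconj,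
    gagr_condA_condB ν (fun y => (hY y).ne') hci (hA _).ne' (hB _).ne']

lemma pay_lt_MIf_of_gagr_ne (hA : ∀ a, 0 < prA ν a) (hB : ∀ b, 0 < prB ν b) {f : ℝ → ℝ}
    (hconv : ConvexOn ℝ Set.univ f) (hdiff : Differentiable ℝ f)
    (hinj : Function.Injective (deriv f))
    (hconj : ∀ t : ℝ, fconj f (deriv f t) = t * deriv f t - f t)
    {sA : SA → S → ℝ} {sB : SB → S → ℝ} (hne : ∃ a b, gagr sA sB (prY ν) a b ≠ K ν a b) :
    Pay f ν sA sB < MIf f ν := by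
  obtain ⟨a₀, b₀, hne₀⟩ := hne
  have hsc := hconv.strictConvexOn_univ_of_injective_deriv hdiff hinj
  have hterm_nonneg : ∀ a b, 0 ≤ prA ν a * prB ν b *
      bregmanDiv f (K ν a b) (gagr sA sB (prY ν) a b) := fun a b =>
    mul_nonneg (mul_pos (hA a) (hB b)).le (bregmanDiv_nonneg hconv hdiff _ _)
  have hterm_pos : 0 < prA ν a₀ * prB ν b₀ *
      bregmanDiv f (K ν a₀ b₀) (gagr sA sB (prY ν) a₀ b₀) :=
    mul_pos (mul_pos (hA a₀) (hB b₀)) (bregmanDiv_pos hsc hdiff hne₀)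
  have hsum_pos : 0 < ∑ a, ∑ b, prA ν a * prB ν b *
      bregmanDiv f (K ν a b) (gagr sA sB (prY ν) a b) :=
    Finset.sum_pos' (fun a _ => Finset.sum_nonneg fun b _ => hterm_nonneg a b)
      ⟨a₀, Finset.mem_univ _,
        Finset.sum_pos' (fun b _ => hterm_nonneg a₀ b) ⟨b₀, Finset.mem_univ _, hterm_pos⟩⟩
  rw [pay_eq_MIf_sub_sum_bregmanDiv ν (fun a => (hA a).ne') (fun b => (hB b).ne') hconj]
  linarith

end Payment

section Stability

variable [Fintype SA] [Fintype SB] [Fintype S] {ν : SA → SB → S → ℝ}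

lemma StablePrior.exists_gagr_ne_of_ne_condB (hst : StablePrior ν) {sB : SB → S → ℝ}
    (hsB : ∀ b, IsProbVec (sB b)) (hne : ∃ b, sB b ≠ condB ν b) :
    ∃ a b, gagr (condA ν) sB (prY ν) a b ≠ K ν a b := by
  obtain ⟨b₀, hb₀⟩ := hne
  by_contra! h
  exact hb₀ (funext (hst.1 sB hsB h b₀))

lemma StablePrior.exists_gagr_ne_of_ne_condA (hst : StablePrior ν) {sA : SA → S → ℝ}
    (hsA : ∀ a, IsProbVec (sA a)) (hne : ∃ a, sA a ≠ condA ν a) :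
    ∃ a b, gagr sA (condB ν) (prY ν) a b ≠ K ν a b := by
  obtain ⟨a₀, ha₀⟩ := hne
  by_contra! h
  exact ha₀ (funext (hst.2 sA hsA h a₀))

end Stability

theorem stmt_8_general [Fintype SA] [Fintype SB] [Fintype S]
    (ν : SA → SB → S → ℝ)
    (hA : ∀ a, 0 < prA ν a) (hB : ∀ b, 0 < prB ν b) (hY : ∀ y, 0 < prY ν y)
    (hci : CondIndep ν) (hst : StablePrior ν)
    (f : ℝ → ℝ) (hconv : ConvexOn ℝ Set.univ f) (hdiff : Differentiable ℝ f)
    (hconj : ∀ t : ℝ, fconj f (deriv f t) = t * deriv f t - f t)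
    (hinj : Function.Injective (deriv f)) :
    Pay f ν (condA ν) (condB ν) = MIf f ν
    ∧ (∀ sB : SB → S → ℝ, (∀ b, IsProbVec (sB b)) →
        (∃ b, sB b ≠ condB ν b) →
        Pay f ν (condA ν) sB < Pay f ν (condA ν) (condB ν))
    ∧ (∀ sA : SA → S → ℝ, (∀ a, IsProbVec (sA a)) →
        (∃ a, sA a ≠ condA ν a) →
        Pay f ν sA (condB ν) < MIf f ν) := by
  have htruth := pay_condA_condB ν hA hB hY hci hconj
  refine ⟨htruth, fun sB hsB hne => ?_, fun sA hsA hne => ?_⟩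
  · rw [htruth]
    exact pay_lt_MIf_of_gagr_ne ν hA hB hconv hdiff hinj hconj
      (hst.exists_gagr_ne_of_ne_condB hsB hne)
  · exact pay_lt_MIf_of_gagr_ne ν hA hB hconv hdiff hinj hconj
      (hst.exists_gagr_ne_of_ne_condA hsA hne)

/-- Strict truthfulness of `MCG(f)`: under conditional independence, a stable prior,
and a differentiable convex `f` with injective derivative, the truthful strategy
profile earns `MI^f(X_A;X_B)`, and any unilateral deviation from truth-telling earns
strictly less. -/
theorem stmt_8 [Fintype SA] [Fintype SB] [Fintype S] [Nonempty SA] [Nonempty SB] [Nonempty S]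
    (ν : SA → SB → S → ℝ) (hν : IsPMF ν)
    (hA : ∀ a, 0 < prA ν a) (hB : ∀ b, 0 < prB ν b) (hY : ∀ y, 0 < prY ν y)
    (hci : CondIndep ν) (hst : StablePrior ν)
    (f : ℝ → ℝ) (hconv : ConvexOn ℝ Set.univ f) (hdiff : Differentiable ℝ f) (hf1 : f 1 = 0)
    (hconj : ∀ t : ℝ, fconj f (deriv f t) = t * deriv f t - f t)
    (hinj : Function.Injective (deriv f)) :
    Pay f ν (condA ν) (condB ν) = MIf f ν
    ∧ (∀ sB : SB → S → ℝ, (∀ b, IsProbVec (sB b)) →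
        (∃ b, sB b ≠ condB ν b) →
        Pay f ν (condA ν) sB < Pay f ν (condA ν) (condB ν))
    ∧ (∀ sA : SA → S → ℝ, (∀ a, IsProbVec (sA a)) →
        (∃ a, sA a ≠ condA ν a) →
        Pay f ν sA (condB ν) < MIf f ν) :=
  stmt_8_general ν hA hB hY hci hst f hconv hdiff hconj hinj
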